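/- Compile/commit lemma: for every expression e, store σ, environment ρ, log ξ, continuation κ and time t, let (c, ξ') := commit(e, σ, ρ, ξ, κ, t) and let (c'', ξ'') := commit(e, σ, ρ, ε, κ, t) (the commit with empty log, which defines the refinement r(ev⟨e,ρ,σ,κ⟩^t) := wn(c'', (replay ξ'' σ).1) =: wn(c', σ')). Then c = c' and (replay ξ' σ).1 = (replay ξ σ').1; that is, running the compiled code of e with an accumulated log ξ and then replaying yields exactly the same context and store as first committing e's actions on σ and then replaying ξ on the resulting store. -/

import Mathlib

/-- Primitive operations. -/
inductive Prim | isZero | add1 | sub1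

/-- Literals: integers, booleans, or primitive operations. -/
inductive Lit
  | int (z : ℤ)
  | bool (b : Bool)
  | prim (o : Prim)

/-- ISWIM expressions, labelled. -/
inductive Expr (Var Label : Type)
  | var (x : Var) (ℓ : Label)
  | lit (l : Lit) (ℓ : Label)
  | lam (x : Var) (e : Expr Var Label) (ℓ : Label)
  | app (e₀ e₁ : Expr Var Label) (ℓ : Label)
  | ite (e₀ e₁ e₂ : Expr Var Label) (ℓ : Label)

/-- Values: literals, closures, or delayed values `addr a`. -/
inductive Val (Var Label Addr : Type)
  | lit (l : Lit)
  | clos (x : Var) (e : Expr Var Label) (ρ : Var → Addr)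
  | addr (a : Addr)

/-- Continuations. -/
inductive Kont (Var Label Addr : Type)
  | halt
  | ar (e : Expr Var Label) (ρ : Var → Addr) (aκ : Addr) (ℓ : Label)
  | fn (af aκ : Addr) (ℓ : Label)
  | ifk (e₀ e₁ : Expr Var Label) (ρ : Var → Addr) (aκ : Addr)

/-- Storeables: values or continuations. -/
inductive Storeable (Var Label Addr : Type)
  | val (v : Val Var Label Addr)
  | kont (κ : Kont Var Label Addr)

/-- Stores map addresses to sets of storeables, ordered pointwise. -/
abbrev Store (Var Label Addr : Type) := Addr → Set (Storeable Var Label Addr)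

/-- Replaying a store-delta log `ξ` on a store `σ`. -/
def replay {Addr α : Type*} (ξ : List (Addr × Set α)) (σ : Addr → Set α) :
    (Addr → Set α) × Prop :=
  (fun a => σ a ∪ ⋃ vs ∈ {vs | (a, vs) ∈ ξ}, vs, ∃ p ∈ ξ, ¬ p.2 ⊆ σ p.1)

/-- The `commit` function of abstract compilation: it performs in one step all
`ev`-transitions of the lazy ISWIM machine determined by an expression, returning a
store-less `co` context (a continuation paired with a value) together with a
store-delta log. -/
def commit {Var Label Addr Time : Type}
    (allockont : Time → Label → Store Var Label Addr → Kont Var Label Addr → Addr)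
    (tick : Label → (Var → Addr) → Store Var Label Addr → Time → Time) :
    Expr Var Label → Store Var Label Addr → (Var → Addr) →
      List (Addr × Set (Storeable Var Label Addr)) → Kont Var Label Addr → Time →
      (Kont Var Label Addr × Val Var Label Addr) ×
        List (Addr × Set (Storeable Var Label Addr))
  | .var x _, _, ρ, ξ, κ, _ => ((κ, .addr (ρ x)), ξ)
  | .lit l _, _, _, ξ, κ, _ => ((κ, .lit l), ξ)
  | .lam x e _, _, ρ, ξ, κ, _ => ((κ, .clos x e ρ), ξ)
  | .app e₀ e₁ ℓ, σ, ρ, ξ, κ, t =>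
      commit allockont tick e₀ σ ρ ((allockont t ℓ σ κ, {Storeable.kont κ}) :: ξ)
        (.ar e₁ ρ (allockont t ℓ σ κ) ℓ) (tick ℓ ρ σ t)
  | .ite e₀ e₁ e₂ ℓ, σ, ρ, ξ, κ, t =>
      commit allockont tick e₀ σ ρ ((allockont t ℓ σ κ, {Storeable.kont κ}) :: ξ)
        (.ifk e₁ e₂ ρ (allockont t ℓ σ κ)) (tick ℓ ρ σ t)

theorem replay_fst_append {Addr α : Type*} (ξ₁ ξ₂ : List (Addr × Set α)) (σ : Addr → Set α) :
    (replay (ξ₁ ++ ξ₂) σ).1 = (replay ξ₂ (replay ξ₁ σ).1).1 := by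
  funext a
  simp only [replay, List.mem_append, Set.ofPred_or, Set.biUnion_union, Set.union_assoc]

theorem commit_append {Var Label Addr Time : Type}
    (allockont : Time → Label → Store Var Label Addr → Kont Var Label Addr → Addr)
    (tick : Label → (Var → Addr) → Store Var Label Addr → Time → Time)
    (e : Expr Var Label) (σ : Store Var Label Addr) (ρ : Var → Addr)
    (ξ₁ ξ₂ : List (Addr × Set (Storeable Var Label Addr)))
    (κ : Kont Var Label Addr) (t : Time) :
    commit allockont tick e σ ρ (ξ₁ ++ ξ₂) κ t =
      ((commit allockont tick e σ ρ ξ₁ κ t).1, (commit allockont tick e σ ρ ξ₁ κ t).2 ++ ξ₂) := by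
  induction e generalizing ξ₁ κ t with
  | var | lit | lam => rfl
  | app _ _ _ ih₀ => exact ih₀ (_ :: ξ₁) _ _
  | ite _ _ _ _ ih₀ => exact ih₀ (_ :: ξ₁) _ _

/-- Compile/commit lemma: running the compiled code of `e` with an
accumulated log `ξ` and then replaying yields exactly the same context and store as
first committing `e`'s actions on `σ` (with the empty log, which defines the refinement
of the `ev` state) and then replaying `ξ` on the resulting store. -/
theorem stmt_11 {Var Label Addr Time : Type}
    (allockont : Time → Label → Store Var Label Addr → Kont Var Label Addr → Addr)
    (tick : Label → (Var → Addr) → Store Var Label Addr → Time → Time)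
    (e : Expr Var Label) (σ : Store Var Label Addr) (ρ : Var → Addr)
    (ξ : List (Addr × Set (Storeable Var Label Addr)))
    (κ : Kont Var Label Addr) (t : Time) :
    (commit allockont tick e σ ρ ξ κ t).1 = (commit allockont tick e σ ρ [] κ t).1 ∧
    (replay (commit allockont tick e σ ρ ξ κ t).2 σ).1 =
      (replay ξ (replay (commit allockont tick e σ ρ [] κ t).2 σ).1).1 := by
  rw [← List.nil_append ξ, commit_append, List.nil_append]
  exact ⟨rfl, replay_fst_append _ _ _⟩
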